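/- arXiv:2406.19986 — 3 statements merged into one kernel-verified Lean document; each statement's English description precedes it below -/
import Mathlib

section
/- Let F : ℝ → [0,1] be a cumulative distribution function and let Y be an absolutely continuous real-valued random variable. Then F(Y) is uniformly distributed on (0,1) if and only if Y has CDF F. -/
/-!
If `F` is the CDF of an atomless law `ν`, then `F` is continuous, so for `0 ≤ t < 1` the sublevel
set `{F ≤ t}` is a closed half-line `Iic b` with `F b = t` (intermediate value theorem), whence
`ν {F ≤ t} = t`: the probability integral transform. Conversely, if `F` is monotone and `F(Y)` is
uniform, then `{Y ≤ y}` and `{F(Y) ≤ F y}` differ only inside the null set `{F(Y) = F y}`, so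
`P(Y ≤ y) = F y`.
-/

open MeasureTheory Filter Set ProbabilityTheory

lemma Real.volume_restrict_Ioo_zero_one_Iic (t : ℝ) :
    volume.restrict (Ioo (0 : ℝ) 1) (Iic t) = ENNReal.ofReal (min t 1) := by
  rw [Measure.restrict_congr_set Ioo_ae_eq_Ioc, Measure.restrict_apply measurableSet_Iic,
    inter_comm, Ioc_inter_Iic, Real.volume_Ioc, sub_zero, inf_comm]

lemma Monotone.preimage_Iic_eq_Iic_csSup {α β : Type*} [ConditionallyCompleteLinearOrder α]
    [TopologicalSpace α] [OrderTopology α] [Preorder β] [TopologicalSpace β] [ClosedIicTopology β]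
    {G : α → β} (hmono : Monotone G) (hcont : Continuous G) {t : β}
    (hne : (G ⁻¹' Iic t).Nonempty) (hbdd : BddAbove (G ⁻¹' Iic t)) :
    G ⁻¹' Iic t = Iic (sSup (G ⁻¹' Iic t)) :=
  Subset.antisymm (fun _ hx => le_csSup hbdd hx) fun _ hx =>
    (hmono hx).trans ((isClosed_Iic.preimage hcont).csSup_mem hne hbdd)

lemma Monotone.measure_Iic_eq_measure_preimage_Iic {α β : Type*} [LinearOrder α]
    [PartialOrder β] [MeasurableSpace α] {ν : Measure α} {F : α → β} (hF : Monotone F) {y : α}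
    (hy : ν (F ⁻¹' {F y}) = 0) :
    ν (Iic y) = ν (F ⁻¹' Iic (F y)) := by
  refine le_antisymm (measure_mono fun x hx => hF hx) ?_
  calc ν (F ⁻¹' Iic (F y)) ≤ ν (Iic y ∪ F ⁻¹' {F y}) := measure_mono fun x hx => by
        rcases le_or_gt x y with hxy | hxy
        · exact Or.inl hxy
        · exact Or.inr (le_antisymm hx (hF hxy.le))
    _ ≤ ν (Iic y) + ν (F ⁻¹' {F y}) := measure_union_le _ _
    _ = ν (Iic y) := by rw [hy, add_zero]

namespace StieltjesFunction

variable {R : Type*} [LinearOrder R] [TopologicalSpace R] [OrderTopology R] [CompactIccSpace R]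
  [MeasurableSpace R] [BorelSpace R] [SecondCountableTopology R] [DenselyOrdered R]
  (f : StieltjesFunction R) [NullSingletonClass f.measure]

lemma leftLim_eq_of_nullSingletonClass (a : R) : Function.leftLim f a = f a := by
  have h : ENNReal.ofReal (f a - Function.leftLim f a) = 0 := by
    rw [← f.measure_singleton]
    exact MeasureTheory.measure_singleton a
  rw [ENNReal.ofReal_eq_zero, sub_nonpos] at h
  exact le_antisymm (f.mono.leftLim_le le_rfl) h

lemma continuous_of_nullSingletonClass : Continuous f :=
  continuous_iff_continuousAt.2 fun a => f.mono.continuousAt_iff_leftLim_eq_rightLim.2 <| by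
    rw [f.leftLim_eq_of_nullSingletonClass, f.rightLim_eq]

end StieltjesFunction

namespace ProbabilityTheory

variable (ν : Measure ℝ) [IsProbabilityMeasure ν] [NullSingletonClass ν]

lemma continuous_cdf : Continuous (cdf ν) := by
  have : NullSingletonClass (cdf ν).measure := by rwa [measure_cdf]
  exact (cdf ν).continuous_of_nullSingletonClass

lemma measure_cdf_preimage_Iic (t : ℝ) : ν (cdf ν ⁻¹' Iic t) = ENNReal.ofReal (min t 1) := by
  rcases le_or_gt 1 t with ht1 | ht1
  · have : cdf ν ⁻¹' Iic t = univ := eq_univ_of_forall fun x => (cdf_le_one ν x).trans ht1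
    rw [this, measure_univ, min_eq_right ht1, ENNReal.ofReal_one]
  obtain hempty | ⟨x, hx⟩ := (cdf ν ⁻¹' Iic t).eq_empty_or_nonempty
  · have ht0 : t ≤ 0 := by
      by_contra! ht0
      obtain ⟨x, hx⟩ := ((tendsto_cdf_atBot ν).eventually (eventually_lt_nhds ht0)).exists
      exact hempty.subset (show x ∈ cdf ν ⁻¹' Iic t from hx.le)
    rw [hempty, measure_empty, eq_comm, ENNReal.ofReal_eq_zero]
    exact (min_le_left t 1).trans ht0
  obtain ⟨z, hz⟩ := ((tendsto_cdf_atTop ν).eventually (eventually_gt_nhds ht1)).exists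
  have hbdd : BddAbove (cdf ν ⁻¹' Iic t) :=
    ⟨z, fun x hx => ((monotone_cdf ν).reflect_lt (lt_of_le_of_lt hx hz)).le⟩
  obtain ⟨a, ha⟩ : t ∈ range (cdf ν) :=
    mem_range_of_exists_le_of_exists_ge (continuous_cdf ν) ⟨x, hx⟩ ⟨z, hz.le⟩
  have hS := (monotone_cdf ν).preimage_Iic_eq_Iic_csSup (continuous_cdf ν) ⟨x, hx⟩ hbdd
  set b := sSup (cdf ν ⁻¹' Iic t)
  have hb_mem : b ∈ cdf ν ⁻¹' Iic t := hS ▸ mem_Iic.2 le_rfl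
  have hb : cdf ν b = t := le_antisymm hb_mem (ha ▸ monotone_cdf ν (le_csSup hbdd ha.le))
  rw [hS, ← ofReal_cdf, hb, min_eq_left ht1.le]

theorem map_cdf_eq_volume_restrict_Ioo : ν.map (cdf ν) = volume.restrict (Ioo 0 1) :=
  Measure.ext_of_Iic _ _ fun t => by
    rw [Measure.map_apply (continuous_cdf ν).measurable measurableSet_Iic,
      measure_cdf_preimage_Iic, Real.volume_restrict_Ioo_zero_one_Iic]

end ProbabilityTheory

theorem pit_uniform_iff_cdf_general
    {Ω : Type*} [MeasurableSpace Ω] (μ : Measure Ω) [IsProbabilityMeasure μ]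
    (Y : Ω → ℝ) (hY : Measurable Y) (habs : μ.map Y ≪ (volume : Measure ℝ))
    (F : ℝ → ℝ) (hmono : Monotone F)
    (hrange : ∀ x, F x ∈ Icc (0:ℝ) 1) :
    μ.map (fun ω => F (Y ω)) = volume.restrict (Ioo (0:ℝ) 1)
      ↔ ∀ y, μ.map Y (Iic y) = ENNReal.ofReal (F y) := by
  have hF : Measurable F := hmono.measurable
  have : IsProbabilityMeasure (μ.map Y) := Measure.isProbabilityMeasure_map hY.aemeasurable
  rw [← Function.comp_def F Y, ← Measure.map_map hF hY]
  constructor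
  · intro h y
    have hatom : μ.map Y (F ⁻¹' {F y}) = 0 := by
      rw [← Measure.map_apply hF (measurableSet_singleton _), h, measure_singleton]
    rw [hmono.measure_Iic_eq_measure_preimage_Iic hatom, ← Measure.map_apply hF measurableSet_Iic,
      h, Real.volume_restrict_Ioo_zero_one_Iic, min_eq_left (hrange y).2]
  · intro h
    have : NullSingletonClass (μ.map Y) := ⟨fun a => habs (measure_singleton a)⟩
    have hcdf : ⇑(cdf (μ.map Y)) = F := funext fun y => by
      rw [cdf_eq_real, measureReal_def, h, ENNReal.toReal_ofReal (hrange y).1]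
    rw [← hcdf]
    exact map_cdf_eq_volume_restrict_Ioo _

/-- Let `F : ℝ → [0,1]` be a CDF and `Y` an absolutely continuous real random variable.
Then `F(Y)` is uniform on `(0,1)` iff `Y` has CDF `F`. -/
theorem pit_uniform_iff_cdf
    {Ω : Type*} [MeasurableSpace Ω] (μ : Measure Ω) [IsProbabilityMeasure μ]
    (Y : Ω → ℝ) (hY : Measurable Y) (habs : μ.map Y ≪ (volume : Measure ℝ))
    (F : ℝ → ℝ) (hmono : Monotone F)
    (hrc : ∀ x, ContinuousWithinAt F (Ici x) x)
    (hbot : Tendsto F atBot (nhds 0)) (htop : Tendsto F atTop (nhds 1))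
    (hrange : ∀ x, F x ∈ Icc (0:ℝ) 1) :
    μ.map (fun ω => F (Y ω)) = volume.restrict (Ioo (0:ℝ) 1)
      ↔ ∀ y, μ.map Y (Iic y) = ENNReal.ofReal (F y) :=
  pit_uniform_iff_cdf_general μ Y hY habs F hmono hrange
end

section
/- Let D be a {0,1}-valued random variable and H a random vector, and let π(H) := E[D | H] be the propensity score. Then D is conditionally independent of H given π(H). -/
/-!
The σ-algebra σ(π) need not lie in σ(H), but since π agrees a.e. with the σ(H)-measurable
`E[D | H]`, every σ(π)-event agrees a.e. with a σ(H)-event, and this is all the tower property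
needs. Writing `D = 1_A`, for `B ∈ σ(H)` we get
`E[1_{A ∩ B} | π] = E[1_B E[1_A | H] | π] = E[1_B π | π] = π E[1_B | π]`, and `π = P(A | π)`
is the case `B = Ω`: this is the product rule for conditional independence.
-/

open MeasureTheory ProbabilityTheory MeasurableSpace

section CondExp

variable {Ω : Type*} {m mΩ : MeasurableSpace Ω} {μ : Measure Ω}

lemma exists_measurableSet_ae_eq_of_measurableSet_comap {β : Type*} [MeasurableSpace β]
    {g g' : Ω → β} (hg' : Measurable[m] g') (hgg' : g =ᵐ[μ] g')
    {s : Set Ω} (hs : MeasurableSet[MeasurableSpace.comap g inferInstance] s) :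
    ∃ t, MeasurableSet[m] t ∧ s =ᵐ[μ] t := by
  obtain ⟨u, hu, rfl⟩ := hs
  exact ⟨g' ⁻¹' u, hg' hu, hgg'.preimage u⟩

variable [IsFiniteMeasure μ]

theorem condExp_condExp_of_forall_ae_eq_measurableSet {m₁ m₂ : MeasurableSpace Ω}
    (hm₁ : m₁ ≤ mΩ) (hm₂ : m₂ ≤ mΩ)
    (h : ∀ s, MeasurableSet[m₁] s → ∃ t, MeasurableSet[m₂] t ∧ s =ᵐ[μ] t)
    {f : Ω → ℝ} (hf : Integrable f μ) :
    μ[μ[f | m₂] | m₁] =ᵐ[μ] μ[f | m₁] := by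
  refine ae_eq_condExp_of_forall_setIntegral_eq hm₁ hf
    (fun _ _ _ => integrable_condExp.integrableOn) (fun s hs _ => ?_)
    stronglyMeasurable_condExp.aestronglyMeasurable
  obtain ⟨t, ht, hst⟩ := h s hs
  rw [setIntegral_condExp hm₁ integrable_condExp hs, setIntegral_congr_set hst,
    setIntegral_congr_set hst, setIntegral_condExp hm₂ hf ht]

theorem condExp_indicator_comap_ae_eq_mul (hm : m ≤ mΩ)
    {f π : Ω → ℝ} (hf : Integrable f μ) (hπmeas : Measurable π) (hπ : π =ᵐ[μ] μ[f | m])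
    {B : Set Ω} (hB : MeasurableSet[m] B) :
    μ[B.indicator f | MeasurableSpace.comap π inferInstance] =ᵐ[μ]
      π * μ[B.indicator (fun _ => (1 : ℝ)) | MeasurableSpace.comap π inferInstance] := by
  have hπint : Integrable π μ := integrable_condExp.congr hπ.symm
  have hπB : B.indicator π = π * B.indicator (fun _ => (1 : ℝ)) := by
    ext ω; by_cases hω : ω ∈ B <;> simp [hω]
  calc μ[B.indicator f | MeasurableSpace.comap π inferInstance]
      =ᵐ[μ] μ[μ[B.indicator f | m] | MeasurableSpace.comap π inferInstance] :=
        (condExp_condExp_of_forall_ae_eq_measurableSet hπmeas.comap_le hm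
          (fun _ hs => exists_measurableSet_ae_eq_of_measurableSet_comap
            stronglyMeasurable_condExp.measurable hπ hs) (hf.indicator (hm B hB))).symm
    _ =ᵐ[μ] μ[B.indicator π | MeasurableSpace.comap π inferInstance] :=
        condExp_congr_ae ((condExp_indicator hf hB).trans hπ.symm.indicator)
    _ =ᵐ[μ] π * μ[B.indicator (fun _ => (1 : ℝ)) | MeasurableSpace.comap π inferInstance] := by
        rw [hπB]
        exact condExp_mul_of_stronglyMeasurable_left
          (measurable_iff_comap_le.mpr le_rfl).stronglyMeasurable
          (hπB ▸ hπint.indicator (hm B hB)) ((integrable_const 1).indicator (hm B hB))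

theorem condIndep_generateFrom_singleton_of_ae_eq_condExp [StandardBorelSpace Ω] (hm : m ≤ mΩ)
    {A : Set Ω} (hA : MeasurableSet[mΩ] A) {π : Ω → ℝ} (hπmeas : Measurable[mΩ] π)
    (hπ : π =ᵐ[μ] μ⟦A | m⟧) :
    CondIndep (MeasurableSpace.comap π inferInstance) (generateFrom {A}) m hπmeas.comap_le μ := by
  have hA1 : Integrable (A.indicator fun _ => (1 : ℝ)) μ := (integrable_const 1).indicator hA
  have hcond : ∀ B, MeasurableSet[m] B →
      μ⟦A ∩ B | MeasurableSpace.comap π inferInstance⟧ =ᵐ[μ]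
        π * μ⟦B | MeasurableSpace.comap π inferInstance⟧ := by
    intro B hB
    rw [Set.inter_comm, ← Set.indicator_indicator]
    exact condExp_indicator_comap_ae_eq_mul hm hA1 hπmeas hπ hB
  have hcondA : μ⟦A | MeasurableSpace.comap π inferInstance⟧ =ᵐ[μ] π := by
    have h := hcond Set.univ MeasurableSet.univ
    rw [Set.inter_univ, Set.indicator_univ, condExp_const hπmeas.comap_le] at h
    exact h.trans (mul_one π).eventuallyEq
  refine CondIndepSets.condIndep (generateFrom_singleton_le hA) hm (IsPiSystem.singleton A)
    (@isPiSystem_measurableSet _ m) rfl (@generateFrom_measurableSet _ m).symm ?_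
  rw [condIndepSets_iff _ _ {A} {B | MeasurableSet[m] B} (by simpa using hA) (fun B hB => hm B hB)]
  rintro _ B rfl hB
  filter_upwards [hcond B hB, hcondA] with ω hω hωA
  rw [hω, Pi.mul_apply, Pi.mul_apply, hωA]

end CondExp

/-- Balancing property of the propensity score: if `D` is `{0,1}`-valued and
`π = E[D | σ(H)]`, then `D ⫫ H | σ(π)`. -/
theorem propensity_balancing
    {Ω 𝓗 : Type*} {mΩ : MeasurableSpace Ω} [StandardBorelSpace Ω]
    [MeasurableSpace 𝓗]
    (μ : Measure Ω) [IsProbabilityMeasure μ]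
    (D : Ω → ℝ) (hD : Measurable D) (hDval : ∀ ω, D ω = 0 ∨ D ω = 1)
    (H : Ω → 𝓗) (hH : Measurable H)
    (π : Ω → ℝ) (hπ : π =ᵐ[μ] μ[D | MeasurableSpace.comap H inferInstance])
    (hπmeas : Measurable π) :
    CondIndepFun (MeasurableSpace.comap π inferInstance) hπmeas.comap_le D H μ := by
  obtain ⟨A, hA, rfl⟩ : ∃ A, MeasurableSet A ∧ D = A.indicator fun _ => 1 :=
    ⟨D ⁻¹' {1}, hD (measurableSet_singleton 1), by ext ω; rcases hDval ω with h | h <;> simp [h]⟩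
  rw [condIndepFun_iff_condIndep]
  exact condIndep_of_condIndep_of_le_left
    (condIndep_generateFrom_singleton_of_ae_eq_condExp hH.comap_le hA hπmeas hπ)
    (comap_indicator_const_le_generateFrom_singleton A 1)
end

section
/- In the model H := N_H ∼ N(0,1), D := 𝟙(N_D ≥ H) with N_D standard logistic independent of N_H, and Y := 2DH − H, conditional rank similarity fails: F_D*(Y) is not conditionally independent of D given π(H) = expit(H). -/
/-!
Conditioning on `π(H) = expit(H)` is conditioning on `H`. Since `R = Φ(Y)` equals `Φ(H)` when
`D = 1` and `Φ(-H)` when `D = 0`, on `{H > 0}` the event `{R > Φ(0)}` coincides with `{D = 1}`.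
Conditional independence of `R` and `D` would therefore force `p = P(D = 1 | H)` to satisfy
`p = p²` on `{H > 0}`. But independence of `H` and `N_D` gives `p = g(H)` with `g(h) = P(N_D ≥ h)`,
which lies strictly between `0` and `1` because the logistic CDF is strictly increasing, while
`{H > 0}` has positive Gaussian probability.
-/

open MeasureTheory ProbabilityTheory Set

noncomputable def stdNormalCDF (x : ℝ) : ℝ := cdf (gaussianReal 0 1) x

lemma Real.measurableEmbedding_sigmoid : MeasurableEmbedding Real.sigmoid :=
  (MeasurableEmbedding.subtype_coe measurableSet_Icc).comp _root_.measurableEmbedding_sigmoid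

section CondExp

variable {Ω : Type*} {m m0 : MeasurableSpace Ω} {μ : Measure Ω} [IsFiniteMeasure μ]
  {s t G : Set Ω}

lemma condExp_indicator_ae_restrict_eq_of_inter_eq (hm : m ≤ m0) (hs : MeasurableSet s)
    (ht : MeasurableSet t) (hG : MeasurableSet[m] G) (hst : s ∩ G = t ∩ G) :
    μ⟦s|m⟧ =ᵐ[μ.restrict G] μ⟦t|m⟧ := by
  have hloc {u : Set Ω} (hu : MeasurableSet u) :
      μ⟦u|m⟧ =ᵐ[μ.restrict G] μ⟦u ∩ G|m⟧ := by
    have h := condExp_indicator (m := m) (μ := μ) ((integrable_const (1 : ℝ)).indicator hu) hG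
    rw [indicator_indicator, inter_comm] at h
    exact (indicator_ae_eq_restrict (hm G hG)).symm.trans (ae_restrict_of_ae h.symm)
  exact (hloc hs).trans (by rw [hst]; exact (hloc ht).symm)

lemma condExp_indicator_mul_self_ae_restrict_eq (hm : m ≤ m0) (hs : MeasurableSet s)
    (ht : MeasurableSet t) (hG : MeasurableSet[m] G) (hst : s ∩ G = t ∩ G)
    (hindep : μ⟦s ∩ t|m⟧ =ᵐ[μ] fun ω ↦ (μ⟦s|m⟧) ω * (μ⟦t|m⟧) ω) :
    ∀ᵐ ω ∂μ.restrict G, (μ⟦t|m⟧) ω * (μ⟦t|m⟧) ω = (μ⟦t|m⟧) ω := by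
  have hst' : (s ∩ t) ∩ G = t ∩ G := by
    rw [inter_right_comm, hst, inter_right_comm, inter_self]
  filter_upwards [condExp_indicator_ae_restrict_eq_of_inter_eq hm hs ht hG hst,
    condExp_indicator_ae_restrict_eq_of_inter_eq hm (hs.inter ht) ht hG hst',
    ae_restrict_of_ae hindep] with ω hs_eq hst_eq h
  linear_combination hst_eq - h - (μ⟦t|m⟧) ω * hs_eq

lemma not_condIndepFun_of_preimage_inter_eq {β β' : Type*} {mβ : MeasurableSpace β}
    {mβ' : MeasurableSpace β'} [StandardBorelSpace Ω] (hm : m ≤ m0) {f : Ω → β} {g : Ω → β'}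
    (hf : Measurable f) (hg : Measurable g) {s : Set β} {t : Set β'} (hs : MeasurableSet s)
    (ht : MeasurableSet t) (hG : MeasurableSet[m] G) (hG0 : μ G ≠ 0)
    (hst : f ⁻¹' s ∩ G = g ⁻¹' t ∩ G) (hp : ∀ᵐ ω ∂μ, (μ⟦g ⁻¹' t|m⟧) ω ∈ Ioo 0 1) :
    ¬ CondIndepFun m hm f g μ := by
  intro hfg
  have hidem := condExp_indicator_mul_self_ae_restrict_eq hm (hf hs) (hg ht) hG hst
    ((condIndepFun_iff_condExp_inter_preimage_eq_mul hf hg).1 hfg s t hs ht)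
  refine hG0 (Measure.restrict_eq_zero.1 (ae_eq_bot.1 (Filter.eventually_false_iff_eq_bot.1 ?_)))
  filter_upwards [hidem, ae_restrict_of_ae hp] with ω hsq ⟨h0, h1⟩
  nlinarith

end CondExp

section Independence

variable {Ω β γ : Type*} {mΩ : MeasurableSpace Ω} {mβ : MeasurableSpace β}
  {mγ : MeasurableSpace γ} [StandardBorelSpace γ] [Nonempty γ]
  {μ : Measure Ω} [IsFiniteMeasure μ] {X : Ω → β} {Y : Ω → γ}

lemma ProbabilityTheory.IndepFun.condDistrib_ae_eq_const (hXY : IndepFun X Y μ)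
    (hX : Measurable X) (hY : Measurable Y) :
    condDistrib Y X μ =ᵐ[μ.map X] Kernel.const β (μ.map Y) :=
  condDistrib_ae_eq_of_measure_eq_compProd X hY.aemeasurable <| by
    rw [Measure.compProd_const,
      ← indepFun_iff_map_prod_eq_prod_map_map hX.aemeasurable hY.aemeasurable]
    exact hXY

lemma ProbabilityTheory.IndepFun.condExp_preimage_prodMk_ae_eq (hXY : IndepFun X Y μ)
    (hX : Measurable X) (hY : Measurable Y) {s : Set (β × γ)} (hs : MeasurableSet s) :
    μ⟦(fun ω ↦ (X ω, Y ω)) ⁻¹' s | mβ.comap X⟧ =ᵐ[μ]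
      fun ω ↦ (μ.map Y).real (Prod.mk (X ω) ⁻¹' s) := by
  refine (condExp_prod_ae_eq_integral_condDistrib hX hY.aemeasurable
    ((stronglyMeasurable_const (b := (1 : ℝ))).indicator hs)
    ((integrable_const (1 : ℝ)).indicator (hs.preimage (hX.prodMk hY)))).trans ?_
  filter_upwards [ae_of_ae_map hX.aemeasurable (hXY.condDistrib_ae_eq_const hX hY)] with ω hκ
  rw [hκ, Kernel.const_apply]
  exact integral_indicator_one (measurable_prodMk_left hs)

end Independence

lemma StrictMono.preimage_Ioi_ite_neg_inter_eq {Ω : Type*} {f : ℝ → ℝ} (hf : StrictMono f)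
    (B : Set Ω) [DecidablePred (· ∈ B)] (H : Ω → ℝ) :
    (fun ω ↦ f (if ω ∈ B then H ω else -H ω)) ⁻¹' Ioi (f 0) ∩ H ⁻¹' Ioi 0 =
      B ∩ H ⁻¹' Ioi 0 := by
  ext ω
  simp only [mem_inter_iff, mem_preimage, mem_Ioi, and_congr_left_iff]
  intro hH
  split_ifs with hω
  · simpa [hω] using hf hH
  · simpa [hω] using (hf (neg_lt_zero.2 hH)).le

lemma ProbabilityTheory.strictMono_cdf_of_absolutelyContinuous (μ : Measure ℝ)
    [IsProbabilityMeasure μ] (hμ : volume ≪ μ) : StrictMono (cdf μ) := by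
  intro a b hab
  have hpos : μ (Ioc a b) ≠ 0 := fun h ↦ by
    have := hμ h
    simp only [Real.volume_Ioc, ENNReal.ofReal_eq_zero, sub_nonpos] at this
    exact this.not_gt hab
  rwa [← measure_cdf μ, StieltjesFunction.measure_Ioc, ne_eq, ENNReal.ofReal_eq_zero,
    sub_nonpos, not_le] at hpos

lemma ProbabilityTheory.cdf_eq_of_measure_Iic_eq (μ : Measure ℝ) [IsProbabilityMeasure μ]
    {F : ℝ → ℝ} (hF0 : ∀ x, 0 ≤ F x) (hF : ∀ x, μ (Iic x) = ENNReal.ofReal (F x)) :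
    ⇑(cdf μ) = F :=
  funext fun x ↦ by rw [cdf_eq_real, measureReal_def, hF, ENNReal.toReal_ofReal (hF0 x)]

lemma ProbabilityTheory.measureReal_Ici_mem_Ioo_of_strictMono_cdf (μ : Measure ℝ)
    [IsProbabilityMeasure μ] (hμ : StrictMono (cdf μ)) (x : ℝ) :
    μ.real (Ici x) ∈ Ioo 0 1 := by
  constructor
  · calc 0 ≤ 1 - cdf μ (x + 1) := sub_nonneg.2 (cdf_le_one μ _)
      _ < 1 - cdf μ x := by linarith [hμ (lt_add_one x)]
      _ = μ.real (Ioi x) := by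
          rw [cdf_eq_real, ← compl_Iic, probReal_compl_eq_one_sub measurableSet_Iic]
      _ ≤ μ.real (Ici x) := measureReal_mono Ioi_subset_Ici_self
  · calc μ.real (Ici x) = 1 - μ.real (Iio x) := by
          rw [← compl_Iio, probReal_compl_eq_one_sub measurableSet_Iio]
      _ ≤ 1 - cdf μ (x - 1) := by
          rw [cdf_eq_real]
          linarith [measureReal_mono (μ := μ) (Iic_subset_Iio.2 (sub_one_lt x))]
      _ < 1 - cdf μ (x - 2) := by linarith [hμ (show x - 2 < x - 1 by linarith)]
      _ ≤ 1 := sub_le_self _ (cdf_nonneg μ _)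

/-- In the model `H ∼ N(0,1)`, `D = 𝟙(N_D ≥ H)` with `N_D` standard logistic
independent of `H`, `Y = 2DH − H`, conditional rank similarity fails: the iPIT
residual `F_D*(Y) = D·Φ(Y) + (1−D)·Φ(Y)` is not conditionally independent of
`D` given `π(H) = expit(H)` (here `F₀* = F₁* = Φ`). -/
theorem crs_fails_example
    {Ω : Type*} {mΩ : MeasurableSpace Ω} [StandardBorelSpace Ω]
    (μ : Measure Ω) [IsProbabilityMeasure μ]
    (H ND : Ω → ℝ) (hH : Measurable H) (hND : Measurable ND)
    (hHlaw : μ.map H = gaussianReal 0 1)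
    (hNDlaw : ∀ x : ℝ, μ.map ND (Iic x) = ENNReal.ofReal (1 / (1 + Real.exp (-x))))
    (hindep : IndepFun H ND μ)
    (D : Ω → ℝ)
    (hD : ∀ ω, D ω = Set.indicator (Ici (H ω)) (fun _ => (1:ℝ)) (ND ω))
    (Y : Ω → ℝ) (hY : ∀ ω, Y ω = 2 * D ω * H ω - H ω)
    (R : Ω → ℝ)
    (hR : ∀ ω, R ω = D ω * stdNormalCDF (Y ω) + (1 - D ω) * stdNormalCDF (Y ω))
    (π : Ω → ℝ) (hπmeas : Measurable π)
    (hπ : ∀ ω, π ω = 1 / (1 + Real.exp (-(H ω)))) :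
    ¬ CondIndepFun (MeasurableSpace.comap π inferInstance) hπmeas.comap_le
        R D μ := by
  have hπH : MeasurableSpace.comap π inferInstance = MeasurableSpace.comap H inferInstance := by
    rw [show π = Real.sigmoid ∘ H from funext fun ω ↦ by simp [hπ, Real.sigmoid_def],
      ← MeasurableSpace.comap_comp, Real.measurableEmbedding_sigmoid.comap_eq]
  set B := {ω | H ω ≤ ND ω}
  have hB : MeasurableSet B := measurableSet_le hH hND
  have hDB : D = B.indicator fun _ ↦ 1 := funext hD
  have hDB1 : D ⁻¹' {1} = B := by
    ext ω
    by_cases hω : ω ∈ B <;> simp [hDB, hω]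
  have hRB : R = fun ω ↦ stdNormalCDF (if ω ∈ B then H ω else -H ω) := by
    ext ω
    rw [hR, hY, hDB, indicator_apply]
    split_ifs <;> ring_nf
  have hΦ : StrictMono stdNormalCDF :=
    strictMono_cdf_of_absolutelyContinuous _ (gaussianReal_absolutelyContinuous' 0 one_ne_zero)
  have : IsProbabilityMeasure (μ.map ND) := Measure.isProbabilityMeasure_map hND.aemeasurable
  have hND_cdf : StrictMono (cdf (μ.map ND)) := by
    rw [cdf_eq_of_measure_Iic_eq _ (fun x ↦ (Real.sigmoid_pos x).le)
      (by simpa only [Real.sigmoid_def, one_div] using hNDlaw)]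
    exact Real.sigmoid_strictMono
  have hG_pos : μ (H ⁻¹' Ioi 0) ≠ 0 := by
    rw [← Measure.map_apply hH measurableSet_Ioi, hHlaw]
    intro h
    simpa using gaussianReal_absolutelyContinuous' 0 one_ne_zero h
  refine not_condIndepFun_of_preimage_inter_eq hπmeas.comap_le
    (hRB ▸ (monotone_cdf _).measurable.comp (hH.ite hB hH.neg))
    (hDB ▸ measurable_const.indicator hB) (measurableSet_Ioi (a := stdNormalCDF 0))
    (measurableSet_singleton 1) (hπH ▸ ⟨Ioi 0, measurableSet_Ioi, rfl⟩) hG_pos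
    (by rw [hRB, hDB1]; exact hΦ.preimage_Ioi_ite_neg_inter_eq B H) ?_
  rw [hDB1, hπH]
  filter_upwards [hindep.condExp_preimage_prodMk_ae_eq hH hND
    (measurableSet_le measurable_fst measurable_snd)] with ω hω
  exact hω ▸ measureReal_Ici_mem_Ioo_of_strictMono_cdf _ hND_cdf (H ω)
end
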